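/- arXiv:1508.03969 — 3 statements merged into one kernel-verified Lean document; each statement's English description precedes it below -/
import Mathlib

section
/- Let G be a finite group, H ≤ G a subgroup, p a prime, and X a finite G-set. Then the number of points of X fixed by every element of H is congruent modulo p to the number of points of X fixed by every element of O^p(H), i.e. |X^H| ≡ |X^{O^p(H)}| (mod p). -/
/-!
Every `g ∈ H` satisfies `g ^ p ^ |H| ∈ N` for each normal `N ≤ H` of `p`-power index, since that
index divides `p ^ |H|`; hence `H ⧸ O^p(H)` is a `p`-group. It acts on `X^{O^p(H)}` with fixed
points `X^H`, and for a `p`-group action the number of points is congruent modulo `p` to the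
number of fixed points.
-/

def pResidual (p : ℕ) (G : Type*) [Group G] : Subgroup G :=
  ⨅ N ∈ {N : Subgroup G | N.Normal ∧ ∃ k : ℕ, N.index = p ^ k}, N

open MulAction

theorem Subgroup.pow_mem_of_index_dvd {G : Type*} [Group G] (N : Subgroup G) [N.Normal] {n : ℕ}
    (h : N.index ∣ n) (g : G) : g ^ n ∈ N := by
  obtain ⟨c, rfl⟩ := h
  rw [pow_mul]
  exact N.pow_mem (N.pow_index_mem g) c

namespace MulAction

variable {G A : Type*} [Group G] [MulAction G A]

def fixedPointsQuotientEquiv (N : Subgroup G) [N.Normal] :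
    fixedPoints (G ⧸ N) (fixedPoints N A) ≃ fixedPoints G A where
  toFun a := ⟨a.1.1, fun g => congrArg Subtype.val (a.2 (g : G ⧸ N))⟩
  invFun a := ⟨⟨a.1, fun n => a.2 n⟩, fun q => q.induction_on fun g => Subtype.ext (a.2 g)⟩

theorem card_fixedPoints_modEq_of_isPGroup_quotient {p : ℕ} [Fact p.Prime] [Finite A]
    {N : Subgroup G} [N.Normal] (hN : IsPGroup p (G ⧸ N)) :
    Nat.card (fixedPoints N A) ≡ Nat.card (fixedPoints G A) [MOD p] :=
  Nat.card_congr (fixedPointsQuotientEquiv (A := A) N) ▸ hN.card_modEq_card_fixedPoints _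

end MulAction

section pResidual

variable {p : ℕ} {G : Type*} [Group G]

theorem mem_pResidual {g : G} :
    g ∈ pResidual p G ↔ ∀ N : Subgroup G, N.Normal → (∃ k, N.index = p ^ k) → g ∈ N := by
  simp [pResidual, Subgroup.mem_iInf]

instance pResidual_normal : (pResidual p G).Normal :=
  Subgroup.normal_iInf_normal fun _ => Subgroup.normal_iInf_normal fun hN => hN.1

theorem isPGroup_quotient_pResidual (hp : p.Prime) [Finite G] :
    IsPGroup p (G ⧸ pResidual p G) := by
  intro g
  obtain ⟨g, rfl⟩ := QuotientGroup.mk_surjective g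
  refine ⟨Nat.card G, ?_⟩
  rw [← QuotientGroup.mk_pow, QuotientGroup.eq_one_iff, mem_pResidual]
  rintro N hN ⟨k, hk⟩
  have hk_le : k ≤ Nat.card G :=
    (Nat.lt_pow_self hp.one_lt).le.trans (hk ▸ Nat.le_of_dvd Nat.card_pos N.index_dvd_card)
  exact N.pow_mem_of_index_dvd (hk ▸ Nat.pow_dvd_pow p hk_le) g

end pResidual

/-- Let `G` be a finite group, `H ≤ G`, `p` a prime and `X` a finite `G`-set. Then
`|X^H| ≡ |X^{O^p(H)}| (mod p)`, where `O^p(H)` is regarded as a subgroup of `G`. -/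
theorem card_fixedPoints_modEq_pResidual (G : Type*) [Group G] [Fintype G]
    (H : Subgroup G) (p : ℕ) (hp : p.Prime)
    (X : Type*) [Fintype X] [MulAction G X] :
    Nat.card {x : X // ∀ g ∈ H, g • x = x}
      ≡ Nat.card {x : X // ∀ g ∈ (pResidual p ↥H).map H.subtype, g • x = x} [MOD p] := by
  have : Fact p.Prime := ⟨hp⟩
  have hfix_H : fixedPoints H X = {x : X | ∀ g ∈ H, g • x = x} :=
    Set.ext fun _ => Subtype.forall
  have hfix_K : fixedPoints (pResidual p ↥H) X =
      {x : X | ∀ g ∈ (pResidual p ↥H).map H.subtype, g • x = x} := by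
    ext
    simp [Subgroup.mem_map]
  calc Nat.card {x : X // ∀ g ∈ H, g • x = x}
      = Nat.card (fixedPoints H X) := by rw [hfix_H]; rfl
    _ ≡ Nat.card (fixedPoints (pResidual p ↥H) X) [MOD p] :=
      (card_fixedPoints_modEq_of_isPGroup_quotient (isPGroup_quotient_pResidual hp)).symm
    _ = _ := by rw [hfix_K]; rfl
end

section
/- Let G be a finite group and H, K ≤ G subgroups. Then |X^H| = |X^K| for every finite G-set X if and only if H and K are conjugate in G. -/
/-!
The `H`-fixed points of `X` are the points whose stabilizer contains `H`, and translating by `g`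
conjugates stabilizers, so `x ↦ g • x` matches the fixed points of `H` and of `gHg⁻¹`.
Conversely, test the equality on `X = G ⧸ H`: the coset `H` is fixed by `H`, hence some coset
`gH` is fixed by `K`, i.e. `K ≤ gHg⁻¹`. Symmetrically `H` is contained in a conjugate of `K`,
and comparing orders gives `K = gHg⁻¹`.
-/

universe u

open MulAction

section FixedPoints

variable {G X : Type*} [Group G] [MulAction G X]

theorem map_conj_le_stabilizer_smul_iff (H : Subgroup G) (g : G) (x : X) :
    H.map (MulAut.conj g).toMonoidHom ≤ stabilizer G (g • x) ↔ H ≤ stabilizer G x := by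
  rw [stabilizer_smul_eq_stabilizer_map_conj,
    Subgroup.map_le_map_iff_of_injective (MulAut.conj g).injective]

theorem card_fixedPoints_map_conj (H : Subgroup G) (g : G) :
    Nat.card {x : X // ∀ a ∈ H.map (MulAut.conj g).toMonoidHom, a • x = x} =
      Nat.card {x : X // ∀ a ∈ H, a • x = x} :=
  Nat.card_congr ((toPerm g).subtypeEquiv fun x => (map_conj_le_stabilizer_smul_iff H g x).symm).symm

end FixedPoints

section Quotient

variable {G : Type*} [Group G]

theorem exists_le_map_conj_of_smul_eq {H K : Subgroup G} {x : G ⧸ H}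
    (hx : ∀ k ∈ K, k • x = x) : ∃ g : G, K ≤ H.map (MulAut.conj g).toMonoidHom := by
  obtain ⟨g, rfl⟩ := QuotientGroup.mk_surjective x
  refine ⟨g, ?_⟩
  have hg : (g : G ⧸ H) = g • ((1 : G) : G ⧸ H) := by
    rw [MulAction.Quotient.smul_mk, smul_eq_mul, mul_one]
  rw [← stabilizer_quotient H, ← stabilizer_smul_eq_stabilizer_map_conj, ← hg]
  exact hx

theorem exists_le_map_conj_of_card_fixedPoints_quotient_eq [Finite G] (H K : Subgroup G)
    (h : Nat.card {x : G ⧸ H // ∀ g ∈ H, g • x = x} =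
      Nat.card {x : G ⧸ H // ∀ g ∈ K, g • x = x}) :
    ∃ g : G, K ≤ H.map (MulAut.conj g).toMonoidHom := by
  have : Nonempty {x : G ⧸ H // ∀ g ∈ H, g • x = x} :=
    ⟨⟨((1 : G) : G ⧸ H), (stabilizer_quotient H).ge⟩⟩
  obtain ⟨⟨x, hx⟩⟩ := (Nat.card_pos_iff.mp (h ▸ Nat.card_pos)).1
  exact exists_le_map_conj_of_smul_eq hx

end Quotient

theorem Subgroup.map_eq_of_le_map_of_le_map {G G' : Type*} [Group G] [Group G'] [Finite G]
    [Finite G'] {H : Subgroup G} {K : Subgroup G'} {f : G →* G'} {f' : G' →* G}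
    (hf : Function.Injective f) (hf' : Function.Injective f')
    (hK : K ≤ H.map f) (hH : H ≤ K.map f') : H.map f = K := by
  refine (Subgroup.eq_of_le_of_card_ge hK ?_).symm
  calc Nat.card (H.map f) = Nat.card H := Subgroup.card_map_of_injective hf
    _ ≤ Nat.card (K.map f') := Subgroup.card_le_of_le hH
    _ = Nat.card K := Subgroup.card_map_of_injective hf'

/-- Let `G` be a finite group and `H, K ≤ G`. Then `|X^H| = |X^K|` for every finite
`G`-set `X` if and only if `H` and `K` are conjugate in `G`. -/
theorem card_fixedPoints_eq_iff_isConj (G : Type u) [Group G] [Fintype G]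
    (H K : Subgroup G) :
    (∀ (X : Type u) [Fintype X] [MulAction G X],
        Nat.card {x : X // ∀ g ∈ H, g • x = x} = Nat.card {x : X // ∀ g ∈ K, g • x = x})
      ↔ ∃ g : G, H.map (MulAut.conj g).toMonoidHom = K := by
  constructor
  · intro h
    obtain ⟨g₁, hK⟩ := exists_le_map_conj_of_card_fixedPoints_quotient_eq H K
      (@h (G ⧸ H) (Fintype.ofFinite _) _)
    obtain ⟨g₂, hH⟩ := exists_le_map_conj_of_card_fixedPoints_quotient_eq K H
      (@h (G ⧸ K) (Fintype.ofFinite _) _).symm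
    exact ⟨g₁, Subgroup.map_eq_of_le_map_of_le_map (MulAut.conj g₁).injective
      (MulAut.conj g₂).injective hK hH⟩
  · rintro ⟨g, rfl⟩ X _ _
    exact (card_fixedPoints_map_conj H g).symm
end

section
/- Let G be a finite group, H, K ≤ G subgroups, and p a prime. Then |X^H| ≡ |X^K| (mod p) for every finite G-set X if and only if O^p(H) and O^p(K) are conjugate in G. -/
universe u

namespace DressAux

open Subgroup

variable {p : ℕ}

section Basic

variable {A : Type*} [Group A]

theorem pResidual_le {N : Subgroup A} (hN : N.Normal) (hk : ∃ k : ℕ, N.index = p ^ k) :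
    pResidual p A ≤ N :=
  iInf₂_le N ⟨hN, hk⟩

theorem mem_pSet_inf (hp : p.Prime) {N₁ N₂ : Subgroup A}
    (h₁ : N₁.Normal ∧ ∃ k : ℕ, N₁.index = p ^ k)
    (h₂ : N₂.Normal ∧ ∃ k : ℕ, N₂.index = p ^ k) :
    (N₁ ⊓ N₂).Normal ∧ ∃ k : ℕ, (N₁ ⊓ N₂).index = p ^ k := by
  obtain ⟨hn₁, k₁, hk₁⟩ := h₁
  obtain ⟨hn₂, k₂, hk₂⟩ := h₂
  refine ⟨⟨fun n hn g => ⟨hn₁.conj_mem _ hn.1 g, hn₂.conj_mem _ hn.2 g⟩⟩, ?_⟩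
  have h1 : (N₁ ⊓ N₂).relIndex N₂ * N₂.index = (N₁ ⊓ N₂).index :=
    relIndex_mul_index inf_le_right
  have h2 : (N₁ ⊓ N₂).relIndex N₂ = N₁.relIndex N₂ := inf_relIndex_right N₁ N₂
  have h3 : N₁.relIndex N₂ ∣ N₁.index := relIndex_dvd_index_of_normal N₁ N₂
  have h4 : (N₁ ⊓ N₂).index ∣ p ^ (k₁ + k₂) := by
    rw [← h1, h2, pow_add]
    exact mul_dvd_mul (hk₁ ▸ h3) (hk₂ ▸ dvd_refl _)
  obtain ⟨i, _, hi⟩ := (Nat.dvd_prime_pow hp).mp h4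
  exact ⟨i, hi⟩

theorem pResidual_mem [Finite A] (hp : p.Prime) :
    (pResidual p A).Normal ∧ ∃ k : ℕ, (pResidual p A).index = p ^ k := by
  set S : Set (Subgroup A) := {N : Subgroup A | N.Normal ∧ ∃ k : ℕ, N.index = p ^ k} with hS
  have hne : S.Nonempty := ⟨⊤, inferInstance, 0, by simp [index_top]⟩
  obtain ⟨N₀, hN₀, hmin⟩ :=
    (Set.toFinite S).exists_minimalFor (fun N : Subgroup A => Nat.card N) S hne
  have hle : ∀ N ∈ S, N₀ ≤ N := by
    intro N hN
    have hmem : N₀ ⊓ N ∈ S := mem_pSet_inf hp hN₀ hN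
    have hcard : Nat.card (N₀ ⊓ N : Subgroup A) ≤ Nat.card N₀ :=
      Subgroup.card_le_of_le inf_le_left
    have : Nat.card N₀ = Nat.card (N₀ ⊓ N : Subgroup A) := le_antisymm (hmin hmem hcard) hcard
    have heq : N₀ ⊓ N = N₀ := Subgroup.eq_of_le_of_card_ge inf_le_left this.le
    rw [← heq]; exact inf_le_right
  have : pResidual p A = N₀ := le_antisymm (iInf₂_le N₀ hN₀) (le_iInf₂ hle)
  rw [this]; exact hN₀

theorem pResidual_map_equiv [Finite A] (hp : p.Prime) {B : Type*} [Group B] (e : A ≃* B) :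
    (pResidual p A).map e.toMonoidHom = pResidual p B := by
  apply le_antisymm
  · refine le_iInf₂ fun N hN => ?_
    rw [map_le_iff_le_comap]
    refine pResidual_le (hN.1.comap e.toMonoidHom) ?_
    obtain ⟨k, hk⟩ := hN.2
    exact ⟨k, by rw [index_comap_of_surjective _ e.surjective, hk]⟩
  · refine pResidual_le ((pResidual_mem hp).1.map e.toMonoidHom e.surjective) ?_
    obtain ⟨k, hk⟩ := (pResidual_mem (A := A) hp).2
    refine ⟨k, ?_⟩
    have hker : e.toMonoidHom.ker ≤ pResidual p A := by
      rw [(MonoidHom.ker_eq_bot_iff _).mpr e.injective]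
      exact bot_le
    rw [index_map_eq _ e.surjective hker, hk]

end Basic

section Res

variable {G : Type u} [Group G] [Fintype G]

/-- `O^p(L)` regarded as a subgroup of the ambient group. -/
def res (p : ℕ) (L : Subgroup G) : Subgroup G :=
  (pResidual p ↥L).map L.subtype

theorem res_le (L : Subgroup G) : res p L ≤ L :=
  map_subtype_le _

theorem res_normal (hp : p.Prime) (L : Subgroup G) :
    ∀ x ∈ L, ∀ n ∈ res p L, x * n * x⁻¹ ∈ res p L := by
  intro x hx n hn
  obtain ⟨m, hm, rfl⟩ := hn
  have := (pResidual_mem (A := ↥L) hp).1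
  exact ⟨⟨x, hx⟩ * m * ⟨x, hx⟩⁻¹, this.conj_mem m hm ⟨x, hx⟩, rfl⟩

theorem res_relindex (hp : p.Prime) (L : Subgroup G) :
    ∃ k : ℕ, (res p L).relIndex L = p ^ k := by
  obtain ⟨k, hk⟩ := (pResidual_mem (A := ↥L) hp).2
  refine ⟨k, ?_⟩
  have : (res p L).subgroupOf L = pResidual p ↥L :=
    comap_map_eq_self_of_injective L.subtype_injective _
  rw [relIndex, this, hk]

theorem res_min {L N : Subgroup G} (hNL : N ≤ L)
    (hnor : ∀ x ∈ L, ∀ n ∈ N, x * n * x⁻¹ ∈ N)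
    (hk : ∃ k : ℕ, N.relIndex L = p ^ k) : res p L ≤ N := by
  have hnor' : (N.subgroupOf L).Normal := by
    constructor
    intro n hn g
    have : (↑g * ↑n * (↑g)⁻¹ : G) ∈ N := hnor g g.2 n hn
    simpa [Subgroup.mem_subgroupOf] using this
  have hres : pResidual p ↥L ≤ N.subgroupOf L := pResidual_le hnor' hk
  calc res p L ≤ (N.subgroupOf L).map L.subtype := map_mono hres
    _ = N ⊓ L := subgroupOf_map_subtype N L
    _ ≤ N := inf_le_left

theorem res_map_conj (hp : p.Prime) (L : Subgroup G) (g : G) :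
    res p (L.map (MulAut.conj g).toMonoidHom) = (res p L).map (MulAut.conj g).toMonoidHom := by
  set f := (MulAut.conj g).toMonoidHom
  set e := (MulAut.conj g).subgroupMap L
  have h1 : (pResidual p ↥L).map e.toMonoidHom = pResidual p ↥(L.map f) :=
    pResidual_map_equiv hp e
  calc res p (L.map f) = (pResidual p ↥(L.map f)).map (L.map f).subtype := rfl
    _ = ((pResidual p ↥L).map e.toMonoidHom).map (L.map f).subtype := by rw [h1]
    _ = (pResidual p ↥L).map ((L.map f).subtype.comp e.toMonoidHom) := map_map _ _ _
    _ = (pResidual p ↥L).map (f.comp L.subtype) := rfl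
    _ = (res p L).map f := by rw [← map_map]; rfl

theorem res_res (hp : p.Prime) (L : Subgroup G) : res p (res p L) = res p L := by
  set M := res p L with hM
  apply le_antisymm (res_le M)
  have hMnor : ∀ x ∈ L, M.map (MulAut.conj x).toMonoidHom = M := by
    intro x hx
    apply le_antisymm
    · rintro _ ⟨n, hn, rfl⟩
      simpa [MulAut.conj_apply] using res_normal hp L x hx n hn
    · intro n hn
      refine ⟨x⁻¹ * n * x, by simpa using res_normal hp L x⁻¹ (inv_mem hx) n hn, ?_⟩
      simp [MulAut.conj_apply]; group
  refine res_min ((res_le M).trans (res_le L)) ?_ ?_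
  · intro x hx n hn
    have : (res p M).map (MulAut.conj x).toMonoidHom = res p M := by
      rw [← res_map_conj hp, hMnor x hx]
    rw [← this]
    exact ⟨n, hn, by simp [MulAut.conj_apply]⟩
  · obtain ⟨k₁, hk₁⟩ := res_relindex hp M
    obtain ⟨k₂, hk₂⟩ := res_relindex hp L
    rw [← hM] at hk₂
    exact ⟨k₁ + k₂, by
      rw [← relIndex_mul_relIndex (res p M) M L (res_le M) (res_le L), hk₁, hk₂, pow_add]⟩

/-- If `M` is `p`-perfect, `M ≤ P`, and `N` is normal in `P` with `p`-power relative
index, then `M ≤ N`. -/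
theorem perfect_le (hp : p.Prime) {M P N : Subgroup G} (hM : res p M = M) (hMP : M ≤ P)
    (hNP : N ≤ P) (hN : ∀ x ∈ P, ∀ n ∈ N, x * n * x⁻¹ ∈ N)
    (hk : ∃ k : ℕ, N.relIndex P = p ^ k) : M ≤ N := by
  have key : res p M ≤ N ⊓ M := by
    refine res_min inf_le_right ?_ ?_
    · intro x hx n hn
      obtain ⟨hn1, hn2⟩ := mem_inf.mp hn
      exact mem_inf.mpr ⟨hN x (hMP hx) n hn1, mul_mem (mul_mem hx hn2) (inv_mem hx)⟩
    · -- relindex (N ⊓ M) M = N.relIndex M divides N.relIndex P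
      have h1 : (N ⊓ M).relIndex M = N.relIndex M := inf_relIndex_right N M
      have hnor' : (N.subgroupOf P).Normal := by
        constructor
        intro n hn g
        have : (↑g * ↑n * (↑g)⁻¹ : G) ∈ N := hN g g.2 n hn
        simpa [Subgroup.mem_subgroupOf] using this
      have h2 : (N.subgroupOf P).relIndex (M.subgroupOf P) = N.relIndex M :=
        relIndex_subgroupOf hMP
      have h3 : (N.subgroupOf P).relIndex (M.subgroupOf P) ∣ (N.subgroupOf P).index :=
        relIndex_dvd_index_of_normal _ _
      obtain ⟨k, hk⟩ := hk
      have h4 : N.relIndex M ∣ p ^ k := by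
        rw [← h2, ← hk]; exact h3
      obtain ⟨i, _, hi⟩ := (Nat.dvd_prime_pow hp).mp h4
      exact ⟨i, by rw [h1, hi]⟩
  rw [hM] at key
  exact key.trans inf_le_left

end Res

section Fix

variable {G : Type u} [Group G] [Fintype G]

/-- The set of points of `X` fixed by every element of `L`. -/
abbrev Fix (L : Subgroup G) (X : Type u) [MulAction G X] : Type u :=
  {x : X // ∀ g ∈ L, g • x = x}

theorem card_fix_map_conj (L : Subgroup G) (g : G) (X : Type u) [MulAction G X] :
    Nat.card (Fix (L.map (MulAut.conj g).toMonoidHom) X) = Nat.card (Fix L X) := by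
  apply Nat.card_congr
  refine ⟨fun y => ⟨g⁻¹ • y.1, fun l hl => ?_⟩, fun x => ⟨g • x.1, fun h hh => ?_⟩,
    fun y => Subtype.ext (smul_inv_smul g y.1), fun x => Subtype.ext (inv_smul_smul g x.1)⟩
  · have h1 : (g * l * g⁻¹) • y.1 = y.1 := by
      refine y.2 _ ⟨l, hl, ?_⟩
      simp [MulAut.conj_apply]
    calc l • g⁻¹ • y.1 = (g⁻¹ * (g * l * g⁻¹)) • y.1 := by
          rw [smul_smul]; congr 1; group
      _ = g⁻¹ • (g * l * g⁻¹) • y.1 := by rw [mul_smul]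
      _ = g⁻¹ • y.1 := by rw [h1]
  · obtain ⟨l, hl, rfl⟩ := hh
    have : (MulAut.conj g).toMonoidHom l = g * l * g⁻¹ := by simp [MulAut.conj_apply]
    rw [this]
    calc (g * l * g⁻¹) • g • x.1 = (g * l) • x.1 := by rw [smul_smul]; congr 1; group
      _ = g • l • x.1 := by rw [mul_smul]
      _ = g • x.1 := by rw [x.2 l hl]

theorem card_fix_modEq_res (hp : p.Prime) (L : Subgroup G) (X : Type u) [Finite X]
    [MulAction G X] :
    Nat.card (Fix L X) ≡ Nat.card (Fix (res p L) X) [MOD p] := by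
  haveI : Fact p.Prime := ⟨hp⟩
  haveI hNnor : (pResidual p ↥L).Normal := (pResidual_mem hp).1
  set N := pResidual p ↥L with hN
  set Y := Fix (res p L) X with hY
  letI : SMul ↥L Y := ⟨fun a x => ⟨(a : G) • x.1, fun g hg => by
    have h1 : (a : G)⁻¹ * g * ((a : G)⁻¹)⁻¹ ∈ res p L :=
      res_normal hp L (a : G)⁻¹ (inv_mem a.2) g hg
    rw [inv_inv] at h1
    calc g • (a : G) • x.1 = ((a : G) * ((a : G)⁻¹ * g * (a : G))) • x.1 := by
          rw [smul_smul]; congr 1; group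
      _ = (a : G) • (((a : G)⁻¹ * g * (a : G)) • x.1) := by rw [mul_smul]
      _ = (a : G) • x.1 := by rw [x.2 _ h1]⟩⟩
  have smul_def : ∀ (a : ↥L) (y : Y), (a • y).1 = (a : G) • y.1 := fun _ _ => rfl
  letI : MulAction ↥L Y :=
    { one_smul := fun y => Subtype.ext (by rw [smul_def]; simp)
      mul_smul := fun a b y => Subtype.ext (by rw [smul_def, smul_def, smul_def,
        Subgroup.coe_mul, mul_smul]) }
  set φ : ↥L →* Equiv.Perm Y := MulAction.toPermHom ↥L Y with hφ
  have hker : N ≤ φ.ker := by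
    intro n hn
    rw [MonoidHom.mem_ker]
    ext y
    show (n • y : Y).1 = y.1
    rw [smul_def]
    exact y.2 _ ⟨n, hn, rfl⟩
  set ψ := QuotientGroup.lift N φ hker with hψ
  letI : MulAction (↥L ⧸ N) Y :=
    { smul := fun q y => ψ q y
      one_smul := fun y => by show ψ 1 y = y; rw [map_one]; rfl
      mul_smul := fun q q' y => by
        show ψ (q * q') y = ψ q (ψ q' y)
        rw [map_mul]; rfl }
  have smul_mk : ∀ (a : ↥L) (y : Y), (QuotientGroup.mk a : ↥L ⧸ N) • y = a • y := by
    intro a y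
    show ψ (QuotientGroup.mk a) y = a • y
    rw [QuotientGroup.lift_mk']
    rfl
  haveI : Finite Y := Subtype.finite
  have pg : IsPGroup p (↥L ⧸ N) := by
    obtain ⟨k, hk⟩ := (pResidual_mem (A := ↥L) hp).2
    exact IsPGroup.of_card (n := k) (by rw [← Subgroup.index_eq_card, hN, hk])
  have key : Nat.card Y ≡ Nat.card (MulAction.fixedPoints (↥L ⧸ N) Y) [MOD p] :=
    pg.card_modEq_card_fixedPoints Y
  have heq : Nat.card (MulAction.fixedPoints (↥L ⧸ N) Y) = Nat.card (Fix L X) := by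
    apply Nat.card_congr
    refine ⟨fun z => ⟨z.1.1, fun g hg => ?_⟩,
      fun x => ⟨⟨x.1, fun g hg => x.2 g (res_le L hg)⟩, fun q => ?_⟩, ?_, ?_⟩
    · have hq : (QuotientGroup.mk (⟨g, hg⟩ : ↥L) : ↥L ⧸ N) • z.1 = z.1 := z.2 _
      rw [smul_mk] at hq
      have := congrArg Subtype.val hq
      rw [smul_def] at this
      exact this
    · refine QuotientGroup.induction_on q fun a => ?_
      rw [smul_mk]
      exact Subtype.ext (x.2 (a : G) a.2)
    · intro z
      apply Subtype.ext; apply Subtype.ext; rfl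
    · intro x
      rfl
  calc Nat.card (Fix L X) = Nat.card (MulAction.fixedPoints (↥L ⧸ N) Y) := heq.symm
    _ ≡ Nat.card Y [MOD p] := key.symm

end Fix


section Coset

variable {G : Type u} [Group G] [Fintype G]

theorem map_conj_eq_comap (M : Subgroup G) (g : G) :
    M.map (MulAut.conj g).toMonoidHom = M.comap (MulAut.conj g⁻¹).toMonoidHom := by
  ext x
  simp only [mem_map, mem_comap, MulEquiv.toMonoidHom_eq_coe, MonoidHom.coe_coe,
    MulAut.conj_apply]
  constructor
  · rintro ⟨m, hm, rfl⟩
    have : g⁻¹ * (g * m * g⁻¹) * g⁻¹⁻¹ = m := by group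
    rwa [this]
  · intro hx
    refine ⟨g⁻¹ * x * g⁻¹⁻¹, hx, by group⟩

theorem relindex_map_conj (M P : Subgroup G) (g : G) :
    (M.map (MulAut.conj g).toMonoidHom).relIndex (P.map (MulAut.conj g).toMonoidHom)
      = M.relIndex P := by
  rw [map_conj_eq_comap, map_conj_eq_comap, relIndex_comap,
    map_comap_eq_self_of_surjective (MulAut.conj g⁻¹).surjective]

theorem mem_normalizer_of_map_conj_eq {M : Subgroup G} {x : G}
    (h : M.map (MulAut.conj x).toMonoidHom = M) : x ∈ normalizer (M : Set G) := by
  rw [mem_normalizer_iff]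
  intro n
  constructor
  · intro hn
    have h2 : (MulAut.conj x).toMonoidHom n ∈ M := h ▸ mem_map_of_mem _ hn
    simpa [MulAut.conj_apply] using h2
  · intro hn
    rw [← h] at hn
    obtain ⟨m, hm, heq⟩ := hn
    simp only [MulEquiv.toMonoidHom_eq_coe, MonoidHom.coe_coe, MulAut.conj_apply] at heq
    have : m = n := by
      have := mul_right_cancel heq
      exact mul_left_cancel this
    rwa [← this]

theorem exists_conj_of_fix {L P : Subgroup G} (x : Fix L (G ⧸ P)) :
    ∃ g : G, L ≤ P.map (MulAut.conj g).toMonoidHom := by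
  obtain ⟨g, hg⟩ := QuotientGroup.mk_surjective x.1
  refine ⟨g, fun l hl => ?_⟩
  have h1 : l • (QuotientGroup.mk g : G ⧸ P) = QuotientGroup.mk g := by
    rw [hg]; exact x.2 l hl
  have h2 : ((l * g : G) : G ⧸ P) = ((g : G) : G ⧸ P) := h1
  have h3 : g⁻¹ * (l * g) ∈ P := QuotientGroup.eq.mp h2.symm
  refine ⟨g⁻¹ * (l * g), h3, ?_⟩
  simp only [MulEquiv.toMonoidHom_eq_coe, MonoidHom.coe_coe, MulAut.conj_apply]
  group

theorem card_fix_cosets (P : Subgroup G) :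
    Nat.card (Fix P (G ⧸ P)) = P.relIndex (normalizer (P : Set G)) := by
  have e : Fix P (G ⧸ P) ≃ MulAction.fixedPoints ↥P (G ⧸ P) := by
    refine Equiv.subtypeEquivRight fun x => ?_
    constructor
    · intro hx m
      exact hx (m : G) m.2
    · intro hx g hg
      exact hx ⟨g, hg⟩
  rw [Nat.card_congr e, Nat.card_congr (Sylow.fixedPointsMulLeftCosetsEquivQuotient P),
    relIndex, index_eq_card]; rfl

theorem exists_le_conj (hp : p.Prime) {L M : Subgroup G} (hL : res p L = L) (hM : res p M = M)
    (h : ∀ (X : Type u) [Fintype X] [MulAction G X],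
      Nat.card (Fix L X) ≡ Nat.card (Fix M X) [MOD p]) :
    ∃ g : G, L ≤ M.map (MulAut.conj g).toMonoidHom := by
  haveI : Fact p.Prime := ⟨hp⟩
  set V := normalizer (M : Set G) with hV
  have hMV : M ≤ V := Subgroup.le_normalizer
  haveI : (M.subgroupOf V).Normal := Subgroup.normal_in_normalizer
  set π := QuotientGroup.mk' (M.subgroupOf V) with hπ
  obtain ⟨S⟩ : Nonempty (Sylow p (↥V ⧸ M.subgroupOf V)) := inferInstance
  set P₁ := Subgroup.comap (π : ↥V →* ↥V ⧸ M.subgroupOf V) S.toSubgroup with hP₁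
  set P := P₁.map V.subtype with hP
  have hπsurj : Function.Surjective π := QuotientGroup.mk'_surjective _
  have hPV : P ≤ V := map_subtype_le _
  have hP₁sub : P.subgroupOf V = P₁ := comap_map_eq_self_of_injective V.subtype_injective _
  have memP : ∀ h : ↥V, ((h : G) ∈ P ↔ π h ∈ S.toSubgroup) := by
    intro h
    rw [← mem_subgroupOf (H := P), hP₁sub]
    exact Iff.rfl
  have hMP : M ≤ P := by
    intro m hm
    refine ⟨⟨m, hMV hm⟩, ?_, rfl⟩
    show π _ ∈ S.toSubgroup
    have h1 : π ⟨m, hMV hm⟩ = 1 := by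
      rw [← MonoidHom.mem_ker, hπ, QuotientGroup.ker_mk']
      exact hm
    rw [h1]; exact one_mem _
  have hMnorP : ∀ x ∈ P, ∀ n ∈ M, x * n * x⁻¹ ∈ M := fun x hx n =>
    (mem_normalizer_iff.mp (hPV hx) n).mp
  have hrelMP : ∃ k, M.relIndex P = p ^ k := by
    obtain ⟨k, hk⟩ := IsPGroup.exists_card_eq S.2
    refine ⟨k, ?_⟩
    have h1 : M.relIndex P = (M.subgroupOf V).relIndex (P.subgroupOf V) :=
      (relIndex_subgroupOf hPV).symm
    have h2 : M.subgroupOf V = Subgroup.comap π ⊥ := by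
      rw [MonoidHom.comap_bot, hπ, QuotientGroup.ker_mk']
    rw [h1, hP₁sub, h2, hP₁, relIndex_comap, map_comap_eq_self_of_surjective hπsurj,
      relIndex_bot_left]
    exact hk
  have hresP : res p P = M :=
    le_antisymm (res_min hMP hMnorP hrelMP)
      (perfect_le hp hM hMP (res_le P) (res_normal hp P) (res_relindex hp P))
  -- the normalizer of P is contained in V
  have hTV : normalizer (P : Set G) ≤ V := by
    intro x hx
    have hconjP : P.map (MulAut.conj x).toMonoidHom = P := by
      apply le_antisymm
      · rintro _ ⟨q, hq, rfl⟩
        simpa [MulAut.conj_apply] using (mem_normalizer_iff.mp hx q).mp hq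
      · intro q hq
        refine ⟨x⁻¹ * q * x, ?_, ?_⟩
        · refine (mem_normalizer_iff.mp hx _).mpr ?_
          have : x * (x⁻¹ * q * x) * x⁻¹ = q := by group
          rwa [this]
        · simp only [MulEquiv.toMonoidHom_eq_coe, MonoidHom.coe_coe, MulAut.conj_apply]
          group
    have hconjM : M.map (MulAut.conj x).toMonoidHom = M := by
      rw [← hresP, ← res_map_conj hp, hconjP]
    exact mem_normalizer_of_map_conj_eq hconjM
  -- p does not divide the number of fixed cosets of P acting on G / P
  have hfixP : ¬ p ∣ Nat.card (Fix P (G ⧸ P)) := by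
    rw [card_fix_cosets]
    have h1 : P.relIndex (normalizer (P : Set G)) = P₁.relIndex ((normalizer (P : Set G)).subgroupOf V) := by
      rw [← hP₁sub, relIndex_subgroupOf hTV]
    have h2 : (normalizer (P : Set G)).subgroupOf V
        = Subgroup.comap π (normalizer (S.toSubgroup : Set (↥V ⧸ M.subgroupOf V))) := by
      ext x
      rw [mem_subgroupOf, mem_comap]
      constructor
      · intro hx
        rw [mem_normalizer_iff]
        intro s
        obtain ⟨h, rfl⟩ := hπsurj s
        rw [← map_inv, ← map_mul, ← map_mul, ← memP, ← memP]
        have := mem_normalizer_iff.mp hx (h : G)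
        simpa using this
      · intro hx
        rw [mem_normalizer_iff]
        intro n
        constructor
        · intro hn
          have hnV : n ∈ V := hPV hn
          have h3 : π ⟨n, hnV⟩ ∈ S.toSubgroup := (memP _).mp hn
          have h4 := (mem_normalizer_iff.mp hx (π ⟨n, hnV⟩)).mp h3
          rw [← map_inv, ← map_mul, ← map_mul, ← memP] at h4
          simpa using h4
        · intro hn
          have hnV : n ∈ V := by
            have h5 : (x : G) * n * (x : G)⁻¹ ∈ V := hPV hn
            have : n = (x : G)⁻¹ * ((x : G) * n * (x : G)⁻¹) * x := by group
            rw [this]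
            exact mul_mem (mul_mem (inv_mem x.2) h5) x.2
          have h6 : ((x * ⟨n, hnV⟩ * x⁻¹ : ↥V) : G) ∈ P := hn
          have h7 := (memP _).mp h6
          rw [map_mul, map_mul, map_inv] at h7
          have h8 := (mem_normalizer_iff.mp hx (π ⟨n, hnV⟩)).mpr h7
          exact (memP _).mpr h8
    have h3 : P₁.relIndex (Subgroup.comap π (normalizer (S.toSubgroup : Set (↥V ⧸ M.subgroupOf V))))
        = S.toSubgroup.relIndex (normalizer (S.toSubgroup : Set (↥V ⧸ M.subgroupOf V))) := by
      rw [hP₁, relIndex_comap, map_comap_eq_self_of_surjective hπsurj]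
    have h4 : S.toSubgroup.relIndex (normalizer (S.toSubgroup : Set (↥V ⧸ M.subgroupOf V))) ∣ S.toSubgroup.index :=
      relIndex_dvd_index_of_le le_normalizer
    have h5 : ¬ p ∣ S.toSubgroup.index := S.not_dvd_index
    rw [h1, h2, h3]
    intro hdvd
    exact h5 (hdvd.trans h4)
  -- apply the hypothesis with X = G / P
  haveI : Fintype (G ⧸ P) := Fintype.ofFinite _
  have hLP : Nat.card (Fix L (G ⧸ P)) ≡ Nat.card (Fix P (G ⧸ P)) [MOD p] := by
    have c2 := card_fix_modEq_res hp P (G ⧸ P)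
    rw [hresP] at c2
    exact (h (G ⧸ P)).trans c2.symm
  have hne : Nat.card (Fix L (G ⧸ P)) ≠ 0 := by
    intro h0
    rw [h0] at hLP
    exact hfixP (Nat.modEq_zero_iff_dvd.mp hLP.symm)
  obtain ⟨x⟩ := (Nat.card_ne_zero.mp hne).1
  obtain ⟨g, hg⟩ := exists_conj_of_fix x
  refine ⟨g, perfect_le hp hL hg (map_mono hMP) ?_ ?_⟩
  · rintro _ ⟨x', hx', rfl⟩ _ ⟨n, hn, rfl⟩
    refine ⟨x' * n * x'⁻¹, hMnorP x' hx' n hn, ?_⟩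
    simp only [MulEquiv.toMonoidHom_eq_coe, MonoidHom.coe_coe, MulAut.conj_apply]
    group
  · obtain ⟨k, hk⟩ := hrelMP
    exact ⟨k, by rw [relindex_map_conj, hk]⟩

end Coset


end DressAux

/-- Let `G` be a finite group, `H, K ≤ G` and `p` a prime. Then
`|X^H| ≡ |X^K| (mod p)` for every finite `G`-set `X` if and only if `O^p(H)` and
`O^p(K)` (regarded as subgroups of `G`) are conjugate in `G`. -/
theorem card_fixedPoints_modEq_iff_pResidual_isConj (G : Type u) [Group G] [Fintype G]
    (H K : Subgroup G) (p : ℕ) (hp : p.Prime) :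
    (∀ (X : Type u) [Fintype X] [MulAction G X],
        Nat.card {x : X // ∀ g ∈ H, g • x = x}
          ≡ Nat.card {x : X // ∀ g ∈ K, g • x = x} [MOD p])
      ↔ ∃ g : G, ((pResidual p ↥H).map H.subtype).map (MulAut.conj g).toMonoidHom
          = (pResidual p ↥K).map K.subtype := by
  haveI : Fact p.Prime := ⟨hp⟩
  have cancel : ∀ (A : Subgroup G) (g : G),
      (A.map (MulAut.conj g).toMonoidHom).map (MulAut.conj g⁻¹).toMonoidHom = A := by
    intro A g
    rw [Subgroup.map_map]
    convert A.map_id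
    ext x
    simp only [MonoidHom.comp_apply, MulEquiv.toMonoidHom_eq_coe, MonoidHom.coe_coe,
      MulAut.conj_apply, MonoidHom.id_apply]
    group
  set L := (pResidual p ↥H).map H.subtype with hLdef
  set M := (pResidual p ↥K).map K.subtype with hMdef
  have hLres : DressAux.res p H = L := rfl
  have hMres : DressAux.res p K = M := rfl
  constructor
  · intro h
    have hLL : DressAux.res p L = L := DressAux.res_res hp H
    have hMM : DressAux.res p M = M := DressAux.res_res hp K
    have h' : ∀ (X : Type u) [Fintype X] [MulAction G X],
        Nat.card (DressAux.Fix L X) ≡ Nat.card (DressAux.Fix M X) [MOD p] := by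
      intro X _ _
      have c1 := DressAux.card_fix_modEq_res hp H X
      have c2 := DressAux.card_fix_modEq_res hp K X
      rw [hLres] at c1
      rw [hMres] at c2
      exact c1.symm.trans ((h X).trans c2)
    have h'' : ∀ (X : Type u) [Fintype X] [MulAction G X],
        Nat.card (DressAux.Fix M X) ≡ Nat.card (DressAux.Fix L X) [MOD p] :=
      fun X _ _ => (h' X).symm
    obtain ⟨g, hg⟩ := DressAux.exists_le_conj hp hLL hMM h'
    obtain ⟨g', hg'⟩ := DressAux.exists_le_conj hp hMM hLL h''
    have hcM : Nat.card (M.map (MulAut.conj g).toMonoidHom) = Nat.card M :=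
      (Nat.card_congr ((MulAut.conj g).subgroupMap M).toEquiv).symm
    have hcL : Nat.card (L.map (MulAut.conj g').toMonoidHom) = Nat.card L :=
      (Nat.card_congr ((MulAut.conj g').subgroupMap L).toEquiv).symm
    have hLM : Nat.card L ≤ Nat.card M := hcM ▸ Subgroup.card_le_of_le hg
    have hML : Nat.card M ≤ Nat.card L := hcL ▸ Subgroup.card_le_of_le hg'
    have heq : L = M.map (MulAut.conj g).toMonoidHom :=
      Subgroup.eq_of_le_of_card_ge hg (by rw [hcM]; exact hML)
    refine ⟨g⁻¹, ?_⟩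
    rw [heq, cancel]
  · rintro ⟨g, hg⟩ X _ _
    have c1 := DressAux.card_fix_modEq_res hp H X
    have c2 := DressAux.card_fix_modEq_res hp K X
    rw [hLres] at c1
    rw [hMres] at c2
    have c3 : Nat.card (DressAux.Fix L X) = Nat.card (DressAux.Fix M X) := by
      rw [← hg, DressAux.card_fix_map_conj]
    have c4 : Nat.card (DressAux.Fix L X) ≡ Nat.card (DressAux.Fix K X) [MOD p] := by
      rw [c3]; exact c2.symm
    exact c1.trans c4
end
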